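/- Let G be a graph and v a vertex of G. Then reg(G) ≤ max{reg(G − v), reg(G − N_G[v]) + 1}, where reg(G) denotes the Castelnuovo–Mumford regularity of the independence complex of G. -/

import Mathlib

open scoped Classical

noncomputable section

/-! ## Simplicial complexes and Castelnuovo–Mumford regularity -/

/-- A (abstract) simplicial complex on the vertex type `V`, given as a
downward closed family of finsets. -/
def IsComplex {V : Type} (Δ : Finset V → Prop) : Prop :=
  ∀ ⦃F G : Finset V⦄, Δ F → G ⊆ F → Δ G

/-- The faces of cardinality `n` of a family `Δ` (faces of card `n` are the
`(n-1)`-dimensional simplices). -/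
def Faces {V : Type} (Δ : Finset V → Prop) (n : ℕ) : Type :=
  {F : Finset V // Δ F ∧ F.card = n}

/-- The simplicial boundary map of the (augmented) chain complex of `Δ` over
a field `k`, from chains on faces of card `n+1` to chains on faces of card `n`,
with signs determined by a linear order on the vertices. -/
def cxBoundary {V : Type} (k : Type) [Field k] [LinearOrder V]
    (Δ : Finset V → Prop) (n : ℕ) :
    (Faces Δ (n + 1) →₀ k) →ₗ[k] (Faces Δ n →₀ k) :=
  Finsupp.lsum k fun F => LinearMap.toSpanSingleton k _
    (∑ x ∈ F.1.attach,
      ((-1 : k) ^ (F.1.filter (fun z => z < x.1)).card) •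
        (if h : Δ (F.1.erase x.1) ∧ (F.1.erase x.1).card = n then
          Finsupp.single (⟨F.1.erase x.1, h⟩ : Faces Δ n) (1 : k) else 0))

/-- Cycles in chain degree `j` (faces of card `j`); in the bottom degree every
chain is a cycle (augmented complex). -/
def cxCycles {V : Type} (k : Type) [Field k] [LinearOrder V]
    (Δ : Finset V → Prop) : (j : ℕ) → Submodule k (Faces Δ j →₀ k)
  | 0 => ⊤
  | (n + 1) => LinearMap.ker (cxBoundary k Δ n)

/-- Nonvanishing of the reduced homology `H̃_{j-1}(Δ; k)`: there is a cycle
supported on faces of cardinality `j` that is not a boundary. -/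
def HNontrivial {V : Type} (k : Type) [Field k] [LinearOrder V]
    (Δ : Finset V → Prop) (j : ℕ) : Prop :=
  ¬ (cxCycles k Δ j ≤ LinearMap.range (cxBoundary k Δ j))

/-- The induced subcomplex `Δ[S]` on a set `S` of vertices. -/
def restrictC {V : Type} (Δ : Finset V → Prop) (S : Set V) : Finset V → Prop :=
  fun F => ↑F ⊆ S ∧ Δ F

/-- The Castelnuovo–Mumford regularity of `Δ` over the field `k`:
the largest `j` such that `H̃_{j-1}(Δ[S]; k) ≠ 0` for some subset `S` of the
vertices. -/
def regC {V : Type} [Fintype V] (k : Type) [Field k] (Δ : Finset V → Prop) : ℕ :=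
  letI : LinearOrder V :=
    LinearOrder.lift' (Fintype.equivFin V) (Fintype.equivFin V).injective
  sSup {j : ℕ | ∃ S : Set V, HNontrivial k (restrictC Δ S) j}

/-- The deletion `del_Δ(x)`. -/
def delC {V : Type} (Δ : Finset V → Prop) (x : V) : Finset V → Prop :=
  fun F => Δ F ∧ x ∉ F

/-- The link `lk_Δ(x)`. -/
def lkC {V : Type} (Δ : Finset V → Prop) (x : V) : Finset V → Prop :=
  fun F => x ∉ F ∧ Δ (insert x F)

/-! ## Independence complexes and regularity of graphs -/

/-- The independence complex of a graph, as a family of finsets. -/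
def indepFaces {V : Type} (G : SimpleGraph V) : Finset V → Prop :=
  fun F => ∀ u ∈ F, ∀ v ∈ F, ¬ G.Adj u v

/-- The regularity `reg(G)` of a graph: the regularity of its independence
complex over `k`. -/
def gReg {V : Type} [Fintype V] (k : Type) [Field k] (G : SimpleGraph V) : ℕ :=
  regC k (indepFaces G)

/-- The regularity of the subgraph of `G` induced on the vertex set `S`. -/
def gRegOn {V : Type} [Fintype V] (k : Type) [Field k] (G : SimpleGraph V)
    (S : Set V) : ℕ :=
  regC k (restrictC (indepFaces G) S)

/-! ## Geometric realization, suspension, wedge -/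

/-- The geometric realization of a family of finsets `Δ` on a finite vertex
type: convex combinations of vertices supported on a face. -/
abbrev cxSpace {V : Type} [Fintype V] (Δ : Finset V → Prop) : Type :=
  {f : V → ℝ // (∃ F : Finset V, Δ F ∧ ∀ v, f v ≠ 0 → v ∈ F) ∧
    (∀ v, 0 ≤ f v) ∧ ∑ v, f v = 1}

/-- Relation generating the unreduced suspension: the two ends of the cylinder
are collapsed to two (always present) poles. -/
def suspRel (X : Type) : (X × unitInterval ⊕ Bool) → (X × unitInterval ⊕ Bool) → Prop
  | Sum.inl (x, t), Sum.inr b => (t = 0 ∧ b = false) ∨ (t = 1 ∧ b = true)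
  | _, _ => False

/-- The unreduced suspension `Σ X` (the join of `X` with a two-point space). -/
abbrev Susp (X : Type) [TopologicalSpace X] : Type := Quot (suspRel X)

/-- Relation generating the wedge sum with respect to chosen basepoints. -/
def wedgeRel (X Y : Type) (x₀ : X) (y₀ : Y) : X ⊕ Y → X ⊕ Y → Prop :=
  fun p q => p = Sum.inl x₀ ∧ q = Sum.inr y₀

/-- The wedge sum `X ∨ Y` with respect to chosen basepoints. -/
abbrev Wedge (X Y : Type) [TopologicalSpace X] [TopologicalSpace Y]
    (x₀ : X) (y₀ : Y) : Type := Quot (wedgeRel X Y x₀ y₀)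

/-! ## Graph invariants -/

/-- `M` is an induced matching of `G`: a set of edges, pairwise with distinct
endpoints and with no edge of `G` between the endpoints of distinct members. -/
def IsInducedMatching {V : Type} (G : SimpleGraph V) (M : Finset (V × V)) : Prop :=
  (∀ p ∈ M, G.Adj p.1 p.2) ∧
    ∀ p ∈ M, ∀ q ∈ M, p ≠ q →
      p.1 ≠ q.1 ∧ p.1 ≠ q.2 ∧ p.2 ≠ q.1 ∧ p.2 ≠ q.2 ∧
      ¬ G.Adj p.1 q.1 ∧ ¬ G.Adj p.1 q.2 ∧ ¬ G.Adj p.2 q.1 ∧ ¬ G.Adj p.2 q.2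

/-- The induced matching number `im(G)`. -/
def inducedMatchingNumber {V : Type} (G : SimpleGraph V) : ℕ :=
  sSup {n : ℕ | ∃ M : Finset (V × V), IsInducedMatching G M ∧ M.card = n}

/-- The independence number `α(G)`. -/
def indepNumber {V : Type} (G : SimpleGraph V) : ℕ :=
  sSup {n : ℕ | ∃ s : Finset V, (∀ u ∈ s, ∀ v ∈ s, ¬ G.Adj u v) ∧ s.card = n}

/-- The decycling number `∇(G)`: the least size of a set of vertices whose
removal leaves an acyclic graph. -/
def decyclingNumber {V : Type} [Fintype V] (G : SimpleGraph V) : ℕ :=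
  sInf {n : ℕ | ∃ D : Finset V, D.card = n ∧
    (G.induce {v : V | v ∉ D}).IsAcyclic}

/-- `K` contains an induced cycle on `n` vertices. -/
def HasInducedCycle {V : Type} (K : SimpleGraph V) (n : ℕ) : Prop :=
  ∃ f : Fin n ↪ V, ∀ i j : Fin n,
    K.Adj (f i) (f j) ↔ ((j : ℕ) = ((i : ℕ) + 1) % n ∨ (i : ℕ) = ((j : ℕ) + 1) % n)

/-- A graph is cochordal if its complement is chordal, i.e. the complement has
no induced cycle of length at least `4`. -/
def Cochordal {V : Type} (H : SimpleGraph V) : Prop :=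
  ∀ n : ℕ, 4 ≤ n → ¬ HasInducedCycle Hᶜ n

/-- The cochordal cover number `cochord(G)`: the least number of cochordal
subgraphs of `G` whose edge sets cover the edges of `G`. -/
def cochordCover {V : Type} (G : SimpleGraph V) : ℕ :=
  sInf {r : ℕ | ∃ H : Fin r → SimpleGraph V,
    (∀ i, H i ≤ G ∧ Cochordal (H i)) ∧ ∀ u v, G.Adj u v → ∃ i, (H i).Adj u v}

/-- The graph `G*` on the edge set of `G`: two edges are adjacent iff the
subgraph induced by their endpoints is `2K₂` (disjoint, with no cross edges). -/
def starGraph {V : Type} (G : SimpleGraph V) : SimpleGraph G.edgeSet :=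
  SimpleGraph.fromRel fun e f =>
    ∀ a ∈ (e.1 : Sym2 V), ∀ b ∈ (f.1 : Sym2 V), a ≠ b ∧ ¬ G.Adj a b

/-- The chromatic number, as a natural number. -/
def chromNum {W : Type} (H : SimpleGraph W) : ℕ :=
  sInf {n : ℕ | ∃ c : W → Fin n, ∀ u v, H.Adj u v → c u ≠ c v}

/-- The clique number `ω`. -/
def cliqueNum {W : Type} (H : SimpleGraph W) : ℕ :=
  sSup {n : ℕ | ∃ s : Finset W, H.IsNClique n s}

/-- A graph is perfect if every induced subgraph has chromatic number equal to
its clique number. -/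
def IsPerfect {W : Type} (H : SimpleGraph W) : Prop :=
  ∀ A : Set W, chromNum (H.induce A) = cliqueNum (H.induce A)

/-! ## Lozin transform, triple subdivision, whiskers -/

/-- Generating relation for the Lozin transform `L_x(G; Y, Z)`: delete `x`,
add the path `y(=0) - a(=1) - b(=2) - z(=3)` on four new vertices, join `y`
to every vertex of `Y` and `z` to every vertex of `Z`. -/
def lozinRel {V : Type} (G : SimpleGraph V) (x : V) (Y Z : Set V) :
    ({w : V // w ≠ x} ⊕ Fin 4) → ({w : V // w ≠ x} ⊕ Fin 4) → Prop
  | Sum.inl u, Sum.inl w => G.Adj u.1 w.1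
  | Sum.inl u, Sum.inr i => (i = 0 ∧ u.1 ∈ Y) ∨ (i = 3 ∧ u.1 ∈ Z)
  | Sum.inr i, Sum.inr j => (i : ℕ) + 1 = (j : ℕ)
  | _, _ => False

/-- The Lozin transform `L_x(G; Y, Z)` of `G` at the vertex `x`. -/
def lozinModel {V : Type} (G : SimpleGraph V) (x : V) (Y Z : Set V) :
    SimpleGraph ({w : V // w ≠ x} ⊕ Fin 4) :=
  SimpleGraph.fromRel (lozinRel G x Y Z)

/-- `{Y, Z}` is a partition of the open neighborhood of `x`. -/
def IsLozinPartition {V : Type} (G : SimpleGraph V) (x : V) (Y Z : Set V) : Prop :=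
  Y ∪ Z = G.neighborSet x ∧ Disjoint Y Z

/-- Generating relation for the triple subdivision of the edge `(u,v)`:
the edge `uv` is removed and replaced by the path `u - y(=0) - a(=1) - b(=2) - v`. -/
def tripleSubRel {V : Type} (G : SimpleGraph V) (u v : V) :
    (V ⊕ Fin 3) → (V ⊕ Fin 3) → Prop
  | Sum.inl a, Sum.inl b => G.Adj a b ∧ ¬(a = u ∧ b = v) ∧ ¬(a = v ∧ b = u)
  | Sum.inl a, Sum.inr i => (a = u ∧ i = 0) ∨ (a = v ∧ i = 2)
  | Sum.inr i, Sum.inr j => (i : ℕ) + 1 = (j : ℕ)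
  | _, _ => False

/-- The triple subdivision `L(G; e)` of `G` at the edge `e = (u,v)`. -/
def tripleSub {V : Type} (G : SimpleGraph V) (u v : V) : SimpleGraph (V ⊕ Fin 3) :=
  SimpleGraph.fromRel (tripleSubRel G u v)

/-- Generating relation for the whisker `W_S(G)`: attach a new pendant vertex
to each vertex of `S`. -/
def whiskerSRel {V : Type} (G : SimpleGraph V) (S : Finset V) :
    (V ⊕ {s : V // s ∈ S}) → (V ⊕ {s : V // s ∈ S}) → Prop
  | Sum.inl a, Sum.inl b => G.Adj a b
  | Sum.inl a, Sum.inr s => a = s.1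
  | _, _ => False

/-- The whisker graph `W_S(G)` on `V ⊕ S`. -/
def whiskerS {V : Type} (G : SimpleGraph V) (S : Finset V) :
    SimpleGraph (V ⊕ {s : V // s ∈ S}) :=
  SimpleGraph.fromRel (whiskerSRel G S)

/-- Generating relation for the full whisker `W(G)`: attach a pendant vertex
to every vertex. -/
def whiskerRel {V : Type} (G : SimpleGraph V) : (V ⊕ V) → (V ⊕ V) → Prop
  | Sum.inl a, Sum.inl b => G.Adj a b
  | Sum.inl a, Sum.inr b => a = b
  | _, _ => False

/-- The full whisker graph `W(G)` on `V ⊕ V`. -/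
def whiskerGraph {V : Type} (G : SimpleGraph V) : SimpleGraph (V ⊕ V) :=
  SimpleGraph.fromRel (whiskerRel G)

/-! ## Vertex decomposability -/

/-- The closed neighborhood of `x` inside the finset `A`. -/
def closedNbrOn {V : Type} (G : SimpleGraph V) (A : Finset V) (x : V) : Finset V :=
  A.filter fun z => z = x ∨ G.Adj x z

/-- `T` is an independent set of `G`. -/
def IsIndepFinset {V : Type} (G : SimpleGraph V) (T : Finset V) : Prop :=
  ∀ u ∈ T, ∀ v ∈ T, ¬ G.Adj u v

/-- `x` is a shedding vertex of the induced subgraph `G[A]`. -/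
def IsSheddingOn {V : Type} (G : SimpleGraph V) (A : Finset V) (x : V) : Prop :=
  ∀ T ⊆ A \ closedNbrOn G A x, IsIndepFinset G T →
    ∃ w ∈ A, G.Adj x w ∧ IsIndepFinset G (insert w T)

/-- Vertex decomposability of the induced subgraph `G[A]`. -/
def VDOn {V : Type} (G : SimpleGraph V) : Finset V → Prop := fun A =>
  (∀ u ∈ A, ∀ v ∈ A, ¬ G.Adj u v) ∨
    ∃ x : {y : V // y ∈ A}, IsSheddingOn G A x.1 ∧
      VDOn G (A.erase x.1) ∧ VDOn G (A \ closedNbrOn G A x.1)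
termination_by A => A.card
decreasing_by
  · exact Finset.card_erase_lt_of_mem x.2
  · refine Finset.card_lt_card ?_
    refine (Finset.ssubset_iff_of_subset Finset.sdiff_subset).2 ⟨x.1, x.2, ?_⟩
    simp [closedNbrOn, x.2]

end

/-!
Write `Δ = del_Δ(w) ∪ w * lk_Δ(w)`. Every chain of `Δ` splits uniquely as `a + w * b` with `a` a
chain of the deletion and `b` a chain of the link, and `∂(w * b) = b - w * ∂b` for a suitable
choice of signs in the cone. Hence for a cycle `z = a + w * b` of `Δ`, `b` is a cycle of the link
and `∂a = -b`. If `b = ∂c` in the link, then `a + c` is a cycle of the deletion, and it does not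
bound there, since `a + c = ∂d` would give `z = ∂(d - w * c)`. Otherwise `b` is a non-bounding
cycle of the link, one degree lower. So `H̃_{j-1}(Δ) ≠ 0` forces `H̃_{j-1}(del_Δ(w)) ≠ 0` or
`H̃_{j-2}(lk_Δ(w)) ≠ 0`.

For `Δ = I(G)[S]` with `v ∈ S`, the deletion of `v` is `I(G - v)[S]` and its link is
`I(G - N_G[v])[S]`; for `v ∉ S`, `I(G)[S] = I(G - v)[S]`. Taking the supremum over `S` gives
the bound.
-/

open Finset

noncomputable section

section Inclusions

variable {V : Type} (k : Type) [Field k] {Δ Δ' : Finset V → Prop}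

theorem IsComplex.delC (hΔ : IsComplex Δ) (w : V) : IsComplex (delC Δ w) :=
  fun _ _ hF hGF => ⟨hΔ hF.1 hGF, fun hw => hF.2 (hGF hw)⟩

theorem IsComplex.lkC (hΔ : IsComplex Δ) (w : V) : IsComplex (lkC Δ w) :=
  fun _ _ hF hGF => ⟨fun hw => hF.1 (hGF hw), hΔ hF.2 (insert_subset_insert w hGF)⟩

theorem delC_le (w : V) : delC Δ w ≤ Δ := fun _ hF => hF.1

theorem lkC_le_delC (hΔ : IsComplex Δ) (w : V) : lkC Δ w ≤ delC Δ w :=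
  fun F hF => ⟨hΔ hF.2 (subset_insert w F), hF.1⟩

def Faces.incl {n : ℕ} (h : Δ' ≤ Δ) (F : Faces Δ' n) : Faces Δ n := ⟨F.1, h _ F.2.1, F.2.2⟩

theorem Faces.incl_injective {n : ℕ} (h : Δ' ≤ Δ) : Function.Injective (Faces.incl (n := n) h) :=
  fun _ _ hFG => Subtype.ext (congrArg (fun F : Faces Δ n => F.1) hFG :)

def chainIncl (h : Δ' ≤ Δ) (n : ℕ) : (Faces Δ' n →₀ k) →ₗ[k] (Faces Δ n →₀ k) :=
  Finsupp.lmapDomain k k (Faces.incl h)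

theorem chainIncl_single (h : Δ' ≤ Δ) {n : ℕ} (F : Faces Δ' n) (c : k) :
    chainIncl k h n (Finsupp.single F c) = Finsupp.single (F.incl h) c :=
  Finsupp.mapDomain_single

theorem chainIncl_injective (h : Δ' ≤ Δ) (n : ℕ) : Function.Injective (chainIncl k h n) :=
  Finsupp.mapDomain_injective (Faces.incl_injective h)

end Inclusions

section ChainMaps

variable {V : Type} [LinearOrder V] (k : Type) [Field k]

def vertexSign (y : V) (S : Finset V) : k := (-1) ^ (S.filter fun z => z < y).card

theorem vertexSign_mul_self (y : V) (S : Finset V) : vertexSign k y S * vertexSign k y S = 1 := by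
  rw [vertexSign, ← pow_add]
  exact Even.neg_one_pow ⟨_, rfl⟩

theorem vertexSign_insert_self (w : V) (s : Finset V) :
    vertexSign k w (insert w s) = vertexSign k w s := by
  rw [vertexSign, vertexSign, filter_insert, if_neg (lt_irrefl w)]

theorem vertexSign_mul_vertexSign_insert {w y : V} {s : Finset V} (hw : w ∉ s) (hy : y ∈ s) :
    vertexSign k w s * vertexSign k y (insert w s) =
      -(vertexSign k y s * vertexSign k w (s.erase y)) := by
  have hne : w ≠ y := fun h => hw (h ▸ hy)
  rw [vertexSign, vertexSign, vertexSign, vertexSign, filter_insert, filter_erase]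
  rcases hne.lt_or_gt with hlt | hgt
  · rw [if_pos hlt, card_insert_of_notMem fun h => hw (mem_of_mem_filter _ h),
      erase_eq_of_notMem fun h => (mem_filter.1 h).2.asymm hlt, pow_succ]
    ring
  · rw [if_neg hgt.asymm, ← card_erase_add_one (mem_filter.2 ⟨hy, hgt⟩), pow_succ]
    ring

/-- `lkC` is elaborated with classical decidable equality; this restates it with the
`insert` of the linear order. -/
theorem lkC_iff (Δ : Finset V → Prop) (w : V) (F : Finset V) :
    lkC Δ w F ↔ w ∉ F ∧ Δ (insert w F) := by
  unfold lkC
  congr!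

theorem cxBoundary_single (Δ : Finset V → Prop) (n : ℕ) (F : Faces Δ (n + 1)) (c : k) :
    cxBoundary k Δ n (Finsupp.single F c) =
      c • ∑ y ∈ F.1, vertexSign k y F.1 •
        (if h : Δ (F.1.erase y) ∧ (F.1.erase y).card = n then
          Finsupp.single (⟨F.1.erase y, h⟩ : Faces Δ n) (1 : k) else 0) := by
  rw [cxBoundary, Finsupp.lsum_single, LinearMap.toSpanSingleton_apply]
  exact congrArg (c • ·) (sum_attach F.1 fun y => vertexSign k y F.1 •
    (if h : Δ (F.1.erase y) ∧ (F.1.erase y).card = n then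
      Finsupp.single (⟨F.1.erase y, h⟩ : Faces Δ n) (1 : k) else 0))

variable {Δ : Finset V → Prop}

theorem IsComplex.erase_face (hΔ : IsComplex Δ) {n : ℕ} (F : Faces Δ (n + 1)) {y : V}
    (hy : y ∈ F.1) : Δ (F.1.erase y) ∧ (F.1.erase y).card = n :=
  ⟨hΔ F.2.1 (erase_subset y F.1), by rw [card_erase_of_mem hy, F.2.2, Nat.add_sub_cancel]⟩

theorem cxBoundary_zero_single (F : Faces Δ 1) (G : Faces Δ 0) (c : k) :
    cxBoundary k Δ 0 (Finsupp.single F c) = Finsupp.single G c := by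
  obtain ⟨s, hs⟩ := F
  obtain ⟨x, rfl⟩ := card_eq_one.1 hs.2
  obtain ⟨t, ht⟩ := G
  obtain rfl := card_eq_zero.1 ht.2
  have hcond : Δ (({x} : Finset V).erase x) ∧ (({x} : Finset V).erase x).card = 0 := by
    rw [erase_singleton]
    exact ht
  rw [cxBoundary_single k Δ 0 ⟨{x}, hs⟩, sum_singleton, dif_pos hcond, vertexSign, filter_singleton,
    if_neg (lt_irrefl x), card_empty, pow_zero, one_smul, Finsupp.smul_single, smul_eq_mul, mul_one]
  exact congrArg (Finsupp.single · c) (Subtype.ext (erase_singleton x))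

variable {n : ℕ}

def Faces.cone {w : V} (F : Faces (lkC Δ w) n) : Faces Δ (n + 1) :=
  ⟨insert w F.1, ((lkC_iff Δ w F.1).1 F.2.1).2, by
    rw [card_insert_of_notMem F.2.1.1, F.2.2]⟩

def Faces.toDelC {w : V} (F : Faces Δ n) (hw : w ∉ F.1) : Faces (delC Δ w) n :=
  ⟨F.1, ⟨F.2.1, hw⟩, F.2.2⟩

def Faces.toLkC {w : V} (F : Faces Δ (n + 1)) (hw : w ∈ F.1) : Faces (lkC Δ w) n :=
  ⟨F.1.erase w, (lkC_iff Δ w _).2 ⟨notMem_erase w F.1, by rw [insert_erase hw]; exact F.2.1⟩,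
    by rw [card_erase_of_mem hw, F.2.2, Nat.add_sub_cancel]⟩

variable (Δ)

/-- The cone `b ↦ w * b`, signed so that `∂(w * b) = b - w * ∂b`. -/
def coneMap (w : V) (n : ℕ) : (Faces (lkC Δ w) n →₀ k) →ₗ[k] (Faces Δ (n + 1) →₀ k) :=
  Finsupp.lsum k fun F => LinearMap.toSpanSingleton k _
    (Finsupp.single F.cone (vertexSign k w F.1))

theorem coneMap_single (w : V) (F : Faces (lkC Δ w) n) (c : k) :
    coneMap k Δ w n (Finsupp.single F c) = Finsupp.single F.cone (c * vertexSign k w F.1) := by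
  rw [coneMap, Finsupp.lsum_single, LinearMap.toSpanSingleton_apply, Finsupp.smul_single,
    smul_eq_mul]

def delProj (w : V) (n : ℕ) : (Faces Δ n →₀ k) →ₗ[k] (Faces (delC Δ w) n →₀ k) :=
  Finsupp.lsum k fun F => if h : w ∉ F.1 then
    LinearMap.toSpanSingleton k _ (Finsupp.single (F.toDelC h) 1) else 0

def lkProj (w : V) (n : ℕ) : (Faces Δ (n + 1) →₀ k) →ₗ[k] (Faces (lkC Δ w) n →₀ k) :=
  Finsupp.lsum k fun F => if h : w ∈ F.1 then
    LinearMap.toSpanSingleton k _ (Finsupp.single (F.toLkC h) (vertexSign k w (F.1.erase w)))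
  else 0

variable {Δ} {w : V}

theorem delProj_single_of_notMem (F : Faces Δ n) (hw : w ∉ F.1) (c : k) :
    delProj k Δ w n (Finsupp.single F c) = Finsupp.single (F.toDelC hw) c := by
  rw [delProj, Finsupp.lsum_single, dif_pos hw, LinearMap.toSpanSingleton_apply,
    Finsupp.smul_single, smul_eq_mul, mul_one]

theorem delProj_single_of_mem (F : Faces Δ n) (hw : w ∈ F.1) (c : k) :
    delProj k Δ w n (Finsupp.single F c) = 0 := by
  rw [delProj, Finsupp.lsum_single, dif_neg (not_not.2 hw), LinearMap.zero_apply]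

theorem lkProj_single_of_mem (F : Faces Δ (n + 1)) (hw : w ∈ F.1) (c : k) :
    lkProj k Δ w n (Finsupp.single F c) =
      Finsupp.single (F.toLkC hw) (c * vertexSign k w (F.1.erase w)) := by
  rw [lkProj, Finsupp.lsum_single, dif_pos hw, LinearMap.toSpanSingleton_apply,
    Finsupp.smul_single, smul_eq_mul]

theorem lkProj_single_of_notMem (F : Faces Δ (n + 1)) (hw : w ∉ F.1) (c : k) :
    lkProj k Δ w n (Finsupp.single F c) = 0 := by
  rw [lkProj, Finsupp.lsum_single, dif_neg hw, LinearMap.zero_apply]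

theorem Faces.toLkC_cone (F : Faces (lkC Δ w) n) :
    F.cone.toLkC (mem_insert_self w F.1) = F :=
  Subtype.ext (erase_insert F.2.1.1)

theorem Faces.cone_toLkC (F : Faces Δ (n + 1)) (hw : w ∈ F.1) : (F.toLkC hw).cone = F :=
  Subtype.ext (insert_erase hw)

theorem delProj_chainIncl (a : Faces (delC Δ w) n →₀ k) :
    delProj k Δ w n (chainIncl k (delC_le w) n a) = a := by
  induction a using Finsupp.induction_linear with
  | zero => simp
  | add a a' ha ha' => rw [map_add, map_add, ha, ha']
  | single F c =>
    rw [chainIncl_single, delProj_single_of_notMem k (F.incl (delC_le w)) F.2.1.2]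
    rfl

theorem delProj_coneMap (b : Faces (lkC Δ w) n →₀ k) :
    delProj k Δ w (n + 1) (coneMap k Δ w n b) = 0 := by
  induction b using Finsupp.induction_linear with
  | zero => simp
  | add b b' hb hb' => rw [map_add, map_add, hb, hb', add_zero]
  | single F c => rw [coneMap_single, delProj_single_of_mem k _ (mem_insert_self w F.1)]

theorem lkProj_chainIncl (a : Faces (delC Δ w) (n + 1) →₀ k) :
    lkProj k Δ w n (chainIncl k (delC_le w) (n + 1) a) = 0 := by
  induction a using Finsupp.induction_linear with
  | zero => simp
  | add a a' ha ha' => rw [map_add, map_add, ha, ha', add_zero]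
  | single F c => rw [chainIncl_single, lkProj_single_of_notMem k (F.incl (delC_le w)) F.2.1.2]

theorem lkProj_coneMap (b : Faces (lkC Δ w) n →₀ k) :
    lkProj k Δ w n (coneMap k Δ w n b) = b := by
  induction b using Finsupp.induction_linear with
  | zero => simp
  | add b b' hb hb' => rw [map_add, map_add, hb, hb']
  | single F c =>
    rw [coneMap_single, lkProj_single_of_mem k _ (mem_insert_self w F.1), Faces.toLkC_cone]
    have hF : (insert w F.1).erase w = F.1 := erase_insert F.2.1.1
    erw [hF, mul_assoc, vertexSign_mul_self, mul_one]

theorem chainIncl_delProj_add_coneMap_lkProj (z : Faces Δ (n + 1) →₀ k) :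
    chainIncl k (delC_le w) (n + 1) (delProj k Δ w (n + 1) z) +
      coneMap k Δ w n (lkProj k Δ w n z) = z := by
  induction z using Finsupp.induction_linear with
  | zero => simp
  | add z z' hz hz' => rw [map_add, map_add, map_add, map_add, add_add_add_comm, hz, hz']
  | single F c =>
    by_cases hw : w ∈ F.1
    · rw [delProj_single_of_mem k F hw, lkProj_single_of_mem k F hw, coneMap_single,
        Faces.cone_toLkC, map_zero, zero_add, mul_assoc]
      erw [vertexSign_mul_self, mul_one]
    · rw [delProj_single_of_notMem k F hw, lkProj_single_of_notMem k F hw, chainIncl_single,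
        map_zero, add_zero]
      rfl

theorem eq_zero_of_chainIncl_add_coneMap_eq_zero {a : Faces (delC Δ w) (n + 1) →₀ k}
    {b : Faces (lkC Δ w) n →₀ k}
    (h : chainIncl k (delC_le w) (n + 1) a + coneMap k Δ w n b = 0) : a = 0 ∧ b = 0 := by
  constructor
  · simpa only [map_add, map_zero, delProj_chainIncl, delProj_coneMap, add_zero]
      using congrArg (delProj k Δ w (n + 1)) h
  · simpa only [map_add, map_zero, lkProj_chainIncl, lkProj_coneMap, zero_add]
      using congrArg (lkProj k Δ w n) h

end ChainMaps

section Boundaries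

variable {V : Type} [LinearOrder V] (k : Type) [Field k] {Δ Δ' : Finset V → Prop}

theorem cxBoundary_chainIncl (h : Δ' ≤ Δ) (hΔ' : IsComplex Δ') (n : ℕ)
    (a : Faces Δ' (n + 1) →₀ k) :
    cxBoundary k Δ n (chainIncl k h (n + 1) a) = chainIncl k h n (cxBoundary k Δ' n a) := by
  induction a using Finsupp.induction_linear with
  | zero => simp
  | add a a' ha ha' => rw [map_add, map_add, ha, ha', map_add, map_add]
  | single F c =>
    rw [chainIncl_single, cxBoundary_single, cxBoundary_single]
    erw [map_smul, map_sum]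
    refine congrArg (c • ·) (sum_congr rfl fun y hy => ?_)
    have hF' := hΔ'.erase_face F hy
    have hF : Δ ((F.incl h).1.erase y) ∧ ((F.incl h).1.erase y).card = n := ⟨h _ hF'.1, hF'.2⟩
    erw [dif_pos hF, dif_pos hF', map_smul, chainIncl_single]
    rfl

variable {w : V}

theorem cxBoundary_coneMap_zero (hΔ : IsComplex Δ) (b : Faces (lkC Δ w) 0 →₀ k) :
    cxBoundary k Δ 0 (coneMap k Δ w 0 b) =
      chainIncl k (delC_le w) 0 (chainIncl k (lkC_le_delC hΔ w) 0 b) := by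
  induction b using Finsupp.induction_linear with
  | zero => simp
  | add b b' hb hb' => rw [map_add, map_add, map_add, map_add, hb, hb']
  | single F c =>
    have hF : vertexSign k w F.1 = 1 := by
      rw [card_eq_zero.1 F.2.2, vertexSign, filter_empty, card_empty, pow_zero]
    rw [coneMap_single, chainIncl_single, chainIncl_single, cxBoundary_zero_single k F.cone, hF,
      mul_one]

theorem cxBoundary_coneMap_single (hΔ : IsComplex Δ) (F : Faces (lkC Δ w) (n + 1)) (c : k) :
    cxBoundary k Δ (n + 1) (coneMap k Δ w (n + 1) (Finsupp.single F c)) =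
      chainIncl k (delC_le w) (n + 1)
          (chainIncl k (lkC_le_delC hΔ w) (n + 1) (Finsupp.single F c)) -
        coneMap k Δ w n (cxBoundary k (lkC Δ w) n (Finsupp.single F c)) := by
  have hwF : w ∉ F.1 := F.2.1.1
  rw [coneMap_single, chainIncl_single, chainIncl_single, cxBoundary_single, cxBoundary_single]
  erw [sum_insert hwF]
  rw [smul_add, sub_eq_add_neg]
  congr 1
  · have hcond : Δ ((insert w F.1).erase w) ∧ ((insert w F.1).erase w).card = n + 1 := by
      rw [erase_insert hwF]
      exact ⟨((lkC_le_delC hΔ w) _ F.2.1).1, F.2.2⟩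
    erw [dif_pos hcond, vertexSign_insert_self, smul_smul, mul_assoc, vertexSign_mul_self, mul_one,
      Finsupp.smul_single, smul_eq_mul, mul_one]
    exact congrArg (Finsupp.single · c) (Subtype.ext (erase_insert hwF))
  · erw [map_smul, map_sum, smul_sum, smul_sum, ← sum_neg_distrib]
    refine sum_congr rfl fun y hy => ?_
    have hne : w ≠ y := fun h => hwF (h ▸ hy)
    have hL := (hΔ.lkC w).erase_face F hy
    have hcond : Δ ((insert w F.1).erase y) ∧ ((insert w F.1).erase y).card = n + 1 := by
      rw [erase_insert_of_ne hne]
      exact (Faces.cone ⟨F.1.erase y, hL⟩).2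
    have hface : (⟨(insert w F.1).erase y, hcond⟩ : Faces Δ (n + 1)) =
        Faces.cone ⟨F.1.erase y, hL⟩ :=
      Subtype.ext (erase_insert_of_ne hne)
    erw [dif_pos hcond, dif_pos hL, map_smul, coneMap_single, hface, smul_smul,
      Finsupp.smul_single, Finsupp.smul_single, Finsupp.smul_single, ← Finsupp.single_neg]
    congr 1
    simp only [smul_eq_mul, mul_one, one_mul]
    change _ * vertexSign k y (insert w F.1) =
      -(c * (vertexSign k y F.1 * vertexSign k w (F.1.erase y)))
    linear_combination c * vertexSign_mul_vertexSign_insert k hwF hy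

theorem cxBoundary_coneMap_succ (hΔ : IsComplex Δ) (b : Faces (lkC Δ w) (n + 1) →₀ k) :
    cxBoundary k Δ (n + 1) (coneMap k Δ w (n + 1) b) =
      chainIncl k (delC_le w) (n + 1) (chainIncl k (lkC_le_delC hΔ w) (n + 1) b) -
        coneMap k Δ w n (cxBoundary k (lkC Δ w) n b) := by
  induction b using Finsupp.induction_linear with
  | zero => simp
  | add b b' hb hb' => simp only [map_add, hb, hb']; abel
  | single F c => exact cxBoundary_coneMap_single k hΔ F c

theorem cxBoundary_chainIncl_add_coneMap_eq_zero_iff (hΔ : IsComplex Δ)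
    {a : Faces (delC Δ w) (n + 1) →₀ k} {b : Faces (lkC Δ w) n →₀ k} :
    cxBoundary k Δ n (chainIncl k (delC_le w) (n + 1) a + coneMap k Δ w n b) = 0 ↔
      b ∈ cxCycles k (lkC Δ w) n ∧
        cxBoundary k (delC Δ w) n a + chainIncl k (lkC_le_delC hΔ w) n b = 0 := by
  rw [map_add, cxBoundary_chainIncl k (delC_le w) (hΔ.delC w)]
  cases n with
  | zero =>
    rw [cxBoundary_coneMap_zero k hΔ, ← map_add, map_eq_zero_iff _ (chainIncl_injective k _ 0)]
    exact ⟨fun h => ⟨Submodule.mem_top, h⟩, And.right⟩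
  | succ n =>
    rw [cxBoundary_coneMap_succ k hΔ, ← add_sub_assoc, ← map_add, sub_eq_add_neg, ← map_neg]
    refine ⟨fun h => ?_, fun ⟨hb, ha⟩ => ?_⟩
    · obtain ⟨ha, hb⟩ := eq_zero_of_chainIncl_add_coneMap_eq_zero k h
      exact ⟨LinearMap.mem_ker.2 (neg_eq_zero.1 hb), ha⟩
    · rw [ha, LinearMap.mem_ker.1 hb, neg_zero, map_zero, map_zero, add_zero]

end Boundaries

section Homology

variable {V : Type} [LinearOrder V] (k : Type) [Field k] {Δ : Finset V → Prop} {w : V}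

theorem not_hNontrivial_zero (hΔ : IsComplex Δ) (hw : Δ {w}) : ¬ HNontrivial k Δ 0 := by
  refine not_not.2 fun z _ => ?_
  let e : Faces Δ 0 := ⟨∅, hΔ hw (empty_subset _), card_empty⟩
  have hz : Finsupp.single e (z e) = z := Finsupp.ext fun F => by
    rw [show F = e from Subtype.ext (card_eq_zero.1 F.2.2), Finsupp.single_eq_same]
  let f : Faces Δ (0 + 1) := ⟨{w}, hw, card_singleton w⟩
  exact ⟨Finsupp.single f (z e), by rw [cxBoundary_zero_single k f e, hz]⟩

theorem hNontrivial_delC_or_lkC (hΔ : IsComplex Δ) (hw : Δ {w}) {j : ℕ}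
    (h : HNontrivial k Δ j) :
    HNontrivial k (delC Δ w) j ∨ ∃ m, j = m + 1 ∧ HNontrivial k (lkC Δ w) m := by
  obtain _ | m := j
  · exact absurd h (not_hNontrivial_zero k hΔ hw)
  obtain ⟨z, hz, hz_nb⟩ := SetLike.not_le_iff_exists.1 h
  rw [← chainIncl_delProj_add_coneMap_lkProj k (w := w) z] at hz hz_nb
  set a := delProj k Δ w (m + 1) z
  set b := lkProj k Δ w m z
  obtain ⟨hb, ha⟩ := (cxBoundary_chainIncl_add_coneMap_eq_zero_iff k hΔ).1 (LinearMap.mem_ker.1 hz)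
  by_cases hb_nb : b ∈ LinearMap.range (cxBoundary k (lkC Δ w) m)
  · obtain ⟨c, hc⟩ := hb_nb
    refine Or.inl (SetLike.not_le_iff_exists.2 ⟨a + chainIncl k (lkC_le_delC hΔ w) (m + 1) c,
      LinearMap.mem_ker.2 ?_, fun ⟨d, hd⟩ => hz_nb ⟨chainIncl k (delC_le w) (m + 2) d -
        coneMap k Δ w (m + 1) c, ?_⟩⟩)
    · rw [map_add, cxBoundary_chainIncl k _ (hΔ.lkC w), hc, ha]
    · rw [map_sub, cxBoundary_chainIncl k _ (hΔ.delC w), hd, cxBoundary_coneMap_succ k hΔ, hc,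
        map_add]
      abel
  · exact Or.inr ⟨m, rfl, fun hle => hb_nb (hle hb)⟩

theorem HNontrivial.le_card [Fintype V] {j : ℕ} (h : HNontrivial k Δ j) :
    j ≤ Fintype.card V := by
  by_contra! hj
  have : IsEmpty (Faces Δ j) := ⟨fun F => (F.2.2 ▸ card_le_univ F.1).not_gt hj⟩
  exact h fun z _ => Subsingleton.elim z 0 ▸ zero_mem _

end Homology

section Regularity

variable {V : Type} [Fintype V] (k : Type) [Field k] {Δ : Finset V → Prop}

abbrev regOrder (V : Type) [Fintype V] : LinearOrder V :=
  LinearOrder.lift' (Fintype.equivFin V) (Fintype.equivFin V).injective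

attribute [local instance] regOrder

theorem le_regC {S : Set V} {j : ℕ} (h : HNontrivial k (restrictC Δ S) j) : j ≤ regC k Δ :=
  le_csSup ⟨Fintype.card V, fun _ ⟨_, hS⟩ => hS.le_card⟩ ⟨S, h⟩

theorem regC_le {r : ℕ} (h : ∀ S j, HNontrivial k (restrictC Δ S) j → j ≤ r) : regC k Δ ≤ r :=
  csSup_le' fun _ ⟨S, hS⟩ => h S _ hS

end Regularity

section IndependenceComplex

variable {V : Type} {Δ : Finset V → Prop} {S : Set V} {v : V}

theorem IsComplex.restrictC (hΔ : IsComplex Δ) (S : Set V) : IsComplex (restrictC Δ S) :=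
  fun _ _ hF hGF => ⟨(coe_subset.2 hGF).trans hF.1, hΔ hF.2 hGF⟩

theorem isComplex_indepFaces (G : SimpleGraph V) : IsComplex (indepFaces G) :=
  fun _ _ hF hGF u hu u' hu' => hF u (hGF hu) u' (hGF hu')

theorem indepFaces_singleton (G : SimpleGraph V) (v : V) : indepFaces G {v} := by
  intro u hu u' hu'
  rw [mem_singleton.1 hu, mem_singleton.1 hu']
  exact G.irrefl

theorem delC_eq_restrictC : delC Δ v = restrictC Δ {u | u ≠ v} := by
  ext F
  exact ⟨fun ⟨hF, hv⟩ => ⟨fun u hu hu' => hv (hu' ▸ hu), hF⟩,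
    fun ⟨hS, hF⟩ => ⟨hF, fun hv => hS hv rfl⟩⟩

theorem delC_restrictC : delC (restrictC Δ S) v = restrictC (delC Δ v) S := by
  ext F
  exact and_assoc

theorem restrictC_delC_of_notMem (hv : v ∉ S) : restrictC (delC Δ v) S = restrictC Δ S := by
  ext F
  exact ⟨fun h => ⟨h.1, h.2.1⟩, fun h => ⟨h.1, h.2, fun hvF => hv (h.1 hvF)⟩⟩

theorem lkC_restrictC (hv : v ∈ S) : lkC (restrictC Δ S) v = restrictC (lkC Δ v) S := by
  ext F
  simp only [lkC, restrictC, coe_insert, Set.insert_subset_iff, hv, true_and]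
  tauto

theorem lkC_indepFaces (G : SimpleGraph V) (v : V) :
    lkC (indepFaces G) v = restrictC (indepFaces G) {u | u ≠ v ∧ ¬ G.Adj v u} := by
  ext F
  constructor
  · rintro ⟨hvF, hF⟩
    exact ⟨fun u hu => ⟨fun h => hvF (h ▸ hu), hF v (mem_insert_self v F) u (mem_insert_of_mem hu)⟩,
      fun u hu u' hu' => hF u (mem_insert_of_mem hu) u' (mem_insert_of_mem hu')⟩
  · rintro ⟨hFS, hF⟩
    refine ⟨fun hvF => (hFS hvF).1 rfl, ?_⟩
    simp only [indepFaces, mem_insert, forall_eq_or_imp]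
    exact ⟨⟨G.irrefl, fun u hu => (hFS hu).2⟩, fun u hu => ⟨fun h => (hFS hu).2 h.symm, hF u hu⟩⟩

end IndependenceComplex

end

/-- For a graph `G` and a vertex `v`,
`reg(G) ≤ max (reg(G - v)) (reg(G - N_G[v]) + 1)`. -/
theorem gReg_le_max_del_link {V : Type} [Fintype V] (k : Type) [Field k]
    (G : SimpleGraph V) (v : V) :
    gReg k G ≤
      max (gRegOn k G {u | u ≠ v}) (gRegOn k G {u | u ≠ v ∧ ¬ G.Adj v u} + 1) := by
  let _ : LinearOrder V := regOrder V
  refine regC_le k fun S j hS => ?_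
  by_cases hv : v ∈ S
  · have hvS : restrictC (indepFaces G) S {v} :=
      ⟨by simpa using hv, indepFaces_singleton G v⟩
    rcases hNontrivial_delC_or_lkC k ((isComplex_indepFaces G).restrictC S) hvS hS with
      hdel | ⟨m, rfl, hlk⟩
    · rw [delC_restrictC, delC_eq_restrictC] at hdel
      exact le_max_of_le_left (le_regC k hdel)
    · rw [lkC_restrictC hv, lkC_indepFaces] at hlk
      exact le_max_of_le_right (Nat.succ_le_succ (le_regC k hlk))
  · rw [← restrictC_delC_of_notMem hv, delC_eq_restrictC] at hS
    exact le_max_of_le_left (le_regC k hS)
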